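/- Let F be a field, R the ring of ternions over F, and n ≥ 1. Under the action of GL_{n+1}(R) on the set of all cyclic submodules of the left R-module R^{n+1} (a cyclic submodule R·X is mapped to R·(X·A) for A ∈ GL_{n+1}(R)), there are exactly six orbits. -/

import Mathlib

set_option synthInstance.maxHeartbeats 1000000
set_option maxHeartbeats 1000000

/-- The ring of ternions over a field `F`: the subring of `2×2` matrices over `F`
consisting of all upper triangular matrices. -/
def ternions (F : Type) [Field F] : Subring (Matrix (Fin 2) (Fin 2) F) where
  carrier := {A | A 1 0 = 0}
  zero_mem' := by simp
  one_mem' := by simp [Matrix.one_apply]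
  add_mem' := by
    intro a b ha hb
    simp only [Set.mem_setOf_eq, Matrix.add_apply] at *
    simp [ha, hb]
  neg_mem' := by
    intro a ha
    simp only [Set.mem_setOf_eq, Matrix.neg_apply] at *
    simp [ha]
  mul_mem' := by
    intro a b ha hb
    simp only [Set.mem_setOf_eq, Matrix.mul_apply, Fin.sum_univ_two] at *
    simp [ha, hb]


/-!
Write a ternion as `[a b; 0 c]`, so that a vector `X ∈ R^m` is a triple `(a, b, c)` of vectors
in `F^m`. Left multiplication by `r ∈ R` sends it to `(r₀₀ a, r₀₀ b + r₀₁ c, r₁₁ c)`, and right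
multiplication by the matrix with components `(α, β, γ)` sends it to `(a α, a β + b γ, c γ)`.
Hence whether `a = 0`, whether `c = 0` and, when `a = 0`, whether `b ∈ F c` depend only on the
orbit of `R X`, which gives six possible types. Conversely, choosing `α, γ ∈ GL_m(F)` and `β`
suitably moves every `X` to one of six normal forms, one of each type; the type
`a = 0, b ∉ F c` needs `m ≥ 2`.
-/

lemma Nat.card_quot_eq_of_normalForm {α β : Type*} {r : α → α → Prop} (f : α → β) (N : β → α)
    (hf : ∀ a b, r a b → f a = f b) (hN : ∀ a, r a (N (f a)))
    (hfN : ∀ b, f (N b) = b) : Nat.card (Quot r) = Nat.card β := by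
  refine Nat.card_congr (Equiv.ofBijective (Quot.lift f hf)
    ⟨?_, fun b => ⟨Quot.mk r (N b), hfN b⟩⟩)
  rintro ⟨a⟩ ⟨b⟩ (h : f a = f b)
  rw [Quot.sound (hN a), Quot.sound (hN b), h]

open Matrix in
lemma Matrix.image_vecMul_span_singleton {R ι κ : Type*} [Semiring R] [Fintype ι]
    (A : Matrix ι κ R) (X : ι → R) :
    (fun v => v ᵥ* A) '' (R ∙ X : Set (ι → R)) = (R ∙ (X ᵥ* A) : Set (κ → R)) := by
  rw [← A.coe_vecMulLinear, ← Submodule.map_coe, Submodule.map_span, Set.image_singleton]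
  rfl

open Matrix in
lemma LinearIndependent.exists_isUnit_vecMul_eq {F ι κ : Type*} [Field F] [Fintype ι]
    [DecidableEq ι] [Finite κ] {v w : κ → ι → F} (hv : LinearIndependent F v)
    (hw : LinearIndependent F w) : ∃ γ : Matrix ι ι F, IsUnit γ ∧ ∀ k, v k ᵥ* γ = w k := by
  have := FiniteDimensional.span_of_finite F (Set.finite_range v)
  obtain ⟨g, hg⟩ := Submodule.exists_linearEquiv_restrict_eq
    (hv.linearCombinationEquiv.symm ≪≫ₗ hw.linearCombinationEquiv)
  refine ⟨(LinearMap.toMatrix' g.toLinearMap)ᵀ, ?_, fun k => ?_⟩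
  · rw [isUnit_transpose, LinearMap.isUnit_toMatrix'_iff, Module.End.isUnit_iff]
    exact g.bijective
  · rw [vecMul_transpose, LinearMap.toMatrix'_mulVec, LinearEquiv.coe_coe]
    simpa using (hg (hv.linearCombinationEquiv (Finsupp.single k 1))).symm

namespace Ternion

open Matrix Submodule

variable {F : Type} [Field F] {ι κ ν : Type*}

def entry (p q : Fin 2) : ternions F →+ F where
  toFun x := (x : Matrix (Fin 2) (Fin 2) F) p q
  map_zero' := rfl
  map_add' _ _ := rfl

def mk (a b c : F) : ternions F := ⟨!![a, b; 0, c], rfl⟩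

@[simp] lemma entry_mk_00 (a b c : F) : entry 0 0 (mk a b c) = a := rfl
@[simp] lemma entry_mk_01 (a b c : F) : entry 0 1 (mk a b c) = b := rfl
@[simp] lemma entry_mk_11 (a b c : F) : entry 1 1 (mk a b c) = c := rfl

@[simp] lemma entry_one_00 : entry 0 0 (1 : ternions F) = 1 := rfl
@[simp] lemma entry_one_01 : entry 0 1 (1 : ternions F) = 0 := rfl
@[simp] lemma entry_one_11 : entry 1 1 (1 : ternions F) = 1 := rfl

lemma coe_apply_one_zero (x : ternions F) : (x : Matrix (Fin 2) (Fin 2) F) 1 0 = 0 := x.2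

lemma ext_entry {x y : ternions F} (h00 : entry 0 0 x = entry 0 0 y)
    (h01 : entry 0 1 x = entry 0 1 y) (h11 : entry 1 1 x = entry 1 1 y) : x = y := by
  have h10 : (x : Matrix (Fin 2) (Fin 2) F) 1 0 = (y : Matrix (Fin 2) (Fin 2) F) 1 0 := by
    rw [coe_apply_one_zero, coe_apply_one_zero]
  ext p q
  fin_cases p <;> fin_cases q <;> assumption

lemma entry_mul_00 (x y : ternions F) : entry 0 0 (x * y) = entry 0 0 x * entry 0 0 y := by
  change ((x : Matrix (Fin 2) (Fin 2) F) * (y : Matrix (Fin 2) (Fin 2) F)) 0 0 = _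
  rw [Matrix.mul_apply, Fin.sum_univ_two, coe_apply_one_zero y, mul_zero, add_zero]
  rfl

lemma entry_mul_01 (x y : ternions F) :
    entry 0 1 (x * y) = entry 0 0 x * entry 0 1 y + entry 0 1 x * entry 1 1 y := by
  change ((x : Matrix (Fin 2) (Fin 2) F) * (y : Matrix (Fin 2) (Fin 2) F)) 0 1 = _
  rw [Matrix.mul_apply, Fin.sum_univ_two]
  rfl

lemma entry_mul_11 (x y : ternions F) : entry 1 1 (x * y) = entry 1 1 x * entry 1 1 y := by
  change ((x : Matrix (Fin 2) (Fin 2) F) * (y : Matrix (Fin 2) (Fin 2) F)) 1 1 = _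
  rw [Matrix.mul_apply, Fin.sum_univ_two, coe_apply_one_zero x, zero_mul, zero_add]
  rfl

lemma isUnit_mk {a c : F} (b : F) (ha : a ≠ 0) (hc : c ≠ 0) : IsUnit (mk a b c) := by
  refine ⟨⟨mk a b c, mk a⁻¹ (-(a⁻¹ * b * c⁻¹)) c⁻¹, ext_entry ?_ ?_ ?_, ext_entry ?_ ?_ ?_⟩, rfl⟩ <;>
    simp [entry_mul_00, entry_mul_01, entry_mul_11] <;> field_simp <;> ring

lemma entry_smul_00 (r : ternions F) (X : ι → ternions F) :
    entry 0 0 ∘ (r • X) = entry 0 0 r • (entry 0 0 ∘ X) :=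
  funext fun i => entry_mul_00 r (X i)

lemma entry_smul_01 (r : ternions F) (X : ι → ternions F) :
    entry 0 1 ∘ (r • X) = entry 0 0 r • (entry 0 1 ∘ X) + entry 0 1 r • (entry 1 1 ∘ X) :=
  funext fun i => entry_mul_01 r (X i)

lemma entry_smul_11 (r : ternions F) (X : ι → ternions F) :
    entry 1 1 ∘ (r • X) = entry 1 1 r • (entry 1 1 ∘ X) :=
  funext fun i => entry_mul_11 r (X i)

lemma ext_vec {X Y : ι → ternions F} (h00 : entry 0 0 ∘ X = entry 0 0 ∘ Y)
    (h01 : entry 0 1 ∘ X = entry 0 1 ∘ Y) (h11 : entry 1 1 ∘ X = entry 1 1 ∘ Y) : X = Y :=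
  funext fun i => ext_entry (congrFun h00 i) (congrFun h01 i) (congrFun h11 i)

def mkVec (a b c : ι → F) : ι → ternions F := fun i => mk (a i) (b i) (c i)

@[simp] lemma entry_comp_mkVec_00 (a b c : ι → F) : entry 0 0 ∘ mkVec a b c = a := rfl
@[simp] lemma entry_comp_mkVec_01 (a b c : ι → F) : entry 0 1 ∘ mkVec a b c = b := rfl
@[simp] lemma entry_comp_mkVec_11 (a b c : ι → F) : entry 1 1 ∘ mkVec a b c = c := rfl

def mkMatrix (α β γ : Matrix ι κ F) : Matrix ι κ (ternions F) :=
  Matrix.of fun i j => mk (α i j) (β i j) (γ i j)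

lemma mkMatrix_one_zero_one [DecidableEq ι] : mkMatrix (1 : Matrix ι ι F) 0 1 = 1 := by
  ext i j : 1
  by_cases h : i = j <;> exact ext_entry (by simp [mkMatrix, one_apply, h])
    (by simp [mkMatrix, one_apply, h]) (by simp [mkMatrix, one_apply, h])

section Fintype

variable [Fintype ι]

lemma entry_dotProduct_00 (x y : ι → ternions F) :
    entry 0 0 (x ⬝ᵥ y) = (entry 0 0 ∘ x) ⬝ᵥ (entry 0 0 ∘ y) := by
  simp only [dotProduct, map_sum, entry_mul_00, Function.comp_apply]

lemma entry_dotProduct_01 (x y : ι → ternions F) :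
    entry 0 1 (x ⬝ᵥ y) =
      (entry 0 0 ∘ x) ⬝ᵥ (entry 0 1 ∘ y) + (entry 0 1 ∘ x) ⬝ᵥ (entry 1 1 ∘ y) := by
  simp only [dotProduct, map_sum, entry_mul_01, Function.comp_apply, Finset.sum_add_distrib]

lemma entry_dotProduct_11 (x y : ι → ternions F) :
    entry 1 1 (x ⬝ᵥ y) = (entry 1 1 ∘ x) ⬝ᵥ (entry 1 1 ∘ y) := by
  simp only [dotProduct, map_sum, entry_mul_11, Function.comp_apply]

lemma entry_vecMul_00 (X : ι → ternions F) (A : Matrix ι κ (ternions F)) :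
    entry 0 0 ∘ (X ᵥ* A) = (entry 0 0 ∘ X) ᵥ* A.map (entry 0 0) :=
  funext fun j => entry_dotProduct_00 X (fun i => A i j)

lemma entry_vecMul_01 (X : ι → ternions F) (A : Matrix ι κ (ternions F)) :
    entry 0 1 ∘ (X ᵥ* A) =
      (entry 0 0 ∘ X) ᵥ* A.map (entry 0 1) + (entry 0 1 ∘ X) ᵥ* A.map (entry 1 1) :=
  funext fun j => entry_dotProduct_01 X (fun i => A i j)

lemma entry_vecMul_11 (X : ι → ternions F) (A : Matrix ι κ (ternions F)) :
    entry 1 1 ∘ (X ᵥ* A) = (entry 1 1 ∘ X) ᵥ* A.map (entry 1 1) :=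
  funext fun j => entry_dotProduct_11 X (fun i => A i j)

lemma vecMul_mkMatrix (X : ι → ternions F) (α β γ : Matrix ι κ F) :
    X ᵥ* mkMatrix α β γ = mkVec ((entry 0 0 ∘ X) ᵥ* α)
      ((entry 0 0 ∘ X) ᵥ* β + (entry 0 1 ∘ X) ᵥ* γ) ((entry 1 1 ∘ X) ᵥ* γ) :=
  funext fun _ => ext_entry (entry_dotProduct_00 _ _) (entry_dotProduct_01 _ _)
    (entry_dotProduct_11 _ _)

lemma mkMatrix_mul_mkMatrix (α β γ : Matrix κ ι F) (α' β' γ' : Matrix ι ν F) :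
    mkMatrix α β γ * mkMatrix α' β' γ' = mkMatrix (α * α') (α * β' + β * γ') (γ * γ') :=
  Matrix.ext fun _ _ => ext_entry (entry_dotProduct_00 _ _) (entry_dotProduct_01 _ _)
    (entry_dotProduct_11 _ _)

lemma isUnit_mkMatrix [DecidableEq ι] {α γ : Matrix ι ι F} (hα : IsUnit α) (hγ : IsUnit γ)
    (β : Matrix ι ι F) : IsUnit (mkMatrix α β γ) := by
  obtain ⟨α, rfl⟩ := hα
  obtain ⟨γ, rfl⟩ := hγ
  refine ⟨⟨mkMatrix α β γ, mkMatrix α.inv (-(α.inv * β * γ.inv)) γ.inv, ?_, ?_⟩, rfl⟩ <;>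
    rw [mkMatrix_mul_mkMatrix, ← mkMatrix_one_zero_one] <;> simp [← mul_assoc]

end Fintype

open Classical in
noncomputable def orbitType (X : ι → ternions F) : Fin 6 :=
  if entry 0 0 ∘ X = 0 then
    if entry 0 1 ∘ X ∈ F ∙ (entry 1 1 ∘ X) then (if entry 1 1 ∘ X = 0 then 0 else 3)
    else if entry 1 1 ∘ X = 0 then 1 else 4
  else if entry 1 1 ∘ X = 0 then 2 else 5

lemma orbitType_eq_of_iff {X Y : ι → ternions F}
    (h00 : entry 0 0 ∘ X = 0 ↔ entry 0 0 ∘ Y = 0) (h11 : entry 1 1 ∘ X = 0 ↔ entry 1 1 ∘ Y = 0)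
    (h01 : entry 0 0 ∘ X = 0 →
      (entry 0 1 ∘ X ∈ F ∙ (entry 1 1 ∘ X) ↔ entry 0 1 ∘ Y ∈ F ∙ (entry 1 1 ∘ Y))) :
    orbitType X = orbitType Y := by
  classical
  unfold orbitType
  by_cases ha : entry 0 0 ∘ X = 0
  · rw [if_pos ha, if_pos (h00.mp ha),
      if_congr (h01 ha) (if_congr h11 rfl rfl) (if_congr h11 rfl rfl)]
  · rw [if_neg ha, if_neg (mt h00.mpr ha), if_congr h11 rfl rfl]

lemma entry_01_smul_mem_span {X : ι → ternions F} (r : ternions F)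
    (hX : entry 0 1 ∘ X ∈ F ∙ (entry 1 1 ∘ X))
    (h11 : entry 1 1 ∘ (r • X) = 0 → entry 1 1 ∘ X = 0) :
    entry 0 1 ∘ (r • X) ∈ F ∙ (entry 1 1 ∘ (r • X)) := by
  by_cases hr : entry 1 1 r = 0
  · have hc : entry 1 1 ∘ X = 0 := h11 (by rw [entry_smul_11, hr, zero_smul])
    rw [hc, span_singleton_eq_bot.mpr rfl, mem_bot] at hX
    simp [entry_smul_01, hX, hc]
  · rw [entry_smul_11, span_singleton_smul_eq (Ne.isUnit hr), entry_smul_01]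
    exact add_mem (smul_mem _ _ hX) (smul_mem _ _ (mem_span_singleton_self _))

lemma orbitType_eq_of_span_eq {X Y : ι → ternions F}
    (h : ternions F ∙ X = ternions F ∙ Y) : orbitType X = orbitType Y := by
  obtain ⟨r, rfl⟩ := mem_span_singleton.mp (h ▸ mem_span_singleton_self Y)
  obtain ⟨s, hs⟩ := mem_span_singleton.mp (h.symm ▸ mem_span_singleton_self X)
  have h00 : entry 0 0 ∘ X = 0 ↔ entry 0 0 ∘ (r • X) = 0 :=
    ⟨fun h => by rw [entry_smul_00, h, smul_zero],
      fun h => by rw [← hs, entry_smul_00, h, smul_zero]⟩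
  have h11 : entry 1 1 ∘ X = 0 ↔ entry 1 1 ∘ (r • X) = 0 :=
    ⟨fun h => by rw [entry_smul_11, h, smul_zero],
      fun h => by rw [← hs, entry_smul_11, h, smul_zero]⟩
  exact orbitType_eq_of_iff h00 h11 fun _ => ⟨fun hX => entry_01_smul_mem_span r hX h11.mpr,
    fun hY => hs ▸ entry_01_smul_mem_span s hY (hs.symm ▸ h11.mp)⟩

section Fintype

variable [Fintype ι]

lemma entry_01_vecMul_mem_span {X : ι → ternions F} (A : Matrix ι κ (ternions F))
    (h00 : entry 0 0 ∘ X = 0) (hX : entry 0 1 ∘ X ∈ F ∙ (entry 1 1 ∘ X)) :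
    entry 0 1 ∘ (X ᵥ* A) ∈ F ∙ (entry 1 1 ∘ (X ᵥ* A)) := by
  obtain ⟨l, hl⟩ := mem_span_singleton.mp hX
  rw [entry_vecMul_01, entry_vecMul_11, h00, zero_vecMul, zero_add, ← hl, smul_vecMul]
  exact smul_mem _ _ (mem_span_singleton_self _)

variable [DecidableEq ι]

lemma orbitType_vecMul (X : ι → ternions F) (A : (Matrix ι ι (ternions F))ˣ) :
    orbitType (X ᵥ* (A : Matrix ι ι (ternions F))) = orbitType X := by
  have hX : X ᵥ* (A : Matrix ι ι (ternions F)) ᵥ* (A⁻¹ : (Matrix ι ι (ternions F))ˣ) = X := by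
    rw [vecMul_vecMul, Units.mul_inv, vecMul_one]
  have h00 : entry 0 0 ∘ (X ᵥ* (A : Matrix ι ι (ternions F))) = 0 ↔ entry 0 0 ∘ X = 0 :=
    ⟨fun h => by rw [← hX, entry_vecMul_00, h, zero_vecMul],
      fun h => by rw [entry_vecMul_00, h, zero_vecMul]⟩
  have h11 : entry 1 1 ∘ (X ᵥ* (A : Matrix ι ι (ternions F))) = 0 ↔ entry 1 1 ∘ X = 0 :=
    ⟨fun h => by rw [← hX, entry_vecMul_11, h, zero_vecMul],
      fun h => by rw [entry_vecMul_11, h, zero_vecMul]⟩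
  exact orbitType_eq_of_iff h00 h11 fun h => ⟨fun hY => hX ▸ entry_01_vecMul_mem_span _ h hY,
    entry_01_vecMul_mem_span _ (h00.mp h)⟩

end Fintype

section NormalForm

variable [DecidableEq ι]

noncomputable def normalForm (i₀ i₁ : ι) : Fin 6 → ι → ternions F :=
  ![mkVec 0 0 0, mkVec 0 (Pi.single i₀ 1) 0, mkVec (Pi.single i₀ 1) 0 0,
    mkVec 0 0 (Pi.single i₀ 1), mkVec 0 (Pi.single i₁ 1) (Pi.single i₀ 1),
    mkVec (Pi.single i₀ 1) 0 (Pi.single i₀ 1)]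

lemma single_one_notMem_span_single {i₀ i₁ : ι} (h : i₀ ≠ i₁) :
    (Pi.single i₁ 1 : ι → F) ∉ F ∙ Pi.single i₀ 1 := by
  rw [mem_span_singleton]
  rintro ⟨l, hl⟩
  simpa [h] using congrFun hl i₁

lemma orbitType_normalForm {i₀ i₁ : ι} (h : i₀ ≠ i₁) (k : Fin 6) :
    orbitType (normalForm (F := F) i₀ i₁ k) = k := by
  fin_cases k <;> simp [orbitType, normalForm, single_one_notMem_span_single h]

variable [Fintype ι]

lemma exists_isUnit_vecMul_eq_single {v : ι → F} (hv : v ≠ 0) (i₀ : ι) :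
    ∃ γ : Matrix ι ι F, IsUnit γ ∧ v ᵥ* γ = Pi.single i₀ 1 := by
  obtain ⟨γ, hγ, h⟩ := LinearIndependent.exists_isUnit_vecMul_eq (v := fun _ : Unit => v)
    (w := fun _ => Pi.single i₀ 1) (linearIndependent_unique_iff.mpr hv)
    (linearIndependent_unique_iff.mpr (by simp))
  exact ⟨γ, hγ, h ()⟩

lemma exists_isUnit_vecMul_eq_of_entry_00_ne_zero {X : ι → ternions F}
    (ha : entry 0 0 ∘ X ≠ 0) (i₀ : ι) {γ : Matrix ι ι F} (hγ : IsUnit γ) :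
    ∃ A : Matrix ι ι (ternions F), IsUnit A ∧
      X ᵥ* A = mkVec (Pi.single i₀ 1) 0 ((entry 1 1 ∘ X) ᵥ* γ) := by
  obtain ⟨α, hα, haα⟩ := exists_isUnit_vecMul_eq_single ha i₀
  -- `β = α eᵢ₀ᵀ (-b γ)` gives `a β = -b γ`, which clears the middle component.
  refine ⟨mkMatrix α (α * vecMulVec (Pi.single i₀ 1) (-((entry 0 1 ∘ X) ᵥ* γ))) γ,
    isUnit_mkMatrix hα hγ _, ?_⟩
  rw [vecMul_mkMatrix, ← vecMul_vecMul, haα, vecMul_vecMulVec, single_dotProduct,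
    Pi.single_eq_same, mul_one, one_smul, neg_add_cancel]

lemma exists_span_eq_normalForm_of_entry_00_eq_zero {i₀ i₁ : ι} (h : i₀ ≠ i₁)
    {X : ι → ternions F} (ha : entry 0 0 ∘ X = 0) :
    ∃ γ : Matrix ι ι F, IsUnit γ ∧ ternions F ∙ mkVec 0 ((entry 0 1 ∘ X) ᵥ* γ)
      ((entry 1 1 ∘ X) ᵥ* γ) = ternions F ∙ normalForm i₀ i₁ (orbitType X) := by
  by_cases hb : entry 0 1 ∘ X ∈ F ∙ (entry 1 1 ∘ X) <;> by_cases hc : entry 1 1 ∘ X = 0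
  · have hb0 : entry 0 1 ∘ X = 0 := by rwa [hc, span_singleton_eq_bot.mpr rfl, mem_bot] at hb
    refine ⟨1, isUnit_one, ?_⟩
    rw [orbitType, if_pos ha, if_pos hb, if_pos hc, hb0, hc, zero_vecMul]
    rfl
  · obtain ⟨l, hl⟩ := mem_span_singleton.mp hb
    obtain ⟨γ, hγ, hcγ⟩ := exists_isUnit_vecMul_eq_single hc i₀
    have hX : mkVec 0 ((entry 0 1 ∘ X) ᵥ* γ) ((entry 1 1 ∘ X) ᵥ* γ) =
        mk 1 l 1 • normalForm i₀ i₁ 3 :=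
      ext_vec (by simp [entry_smul_00, normalForm])
        (by simp [entry_smul_01, normalForm, ← hl, smul_vecMul, hcγ])
        (by simp [entry_smul_11, normalForm, hcγ])
    refine ⟨γ, hγ, ?_⟩
    rw [hX, span_singleton_smul_eq (isUnit_mk l one_ne_zero one_ne_zero), orbitType, if_pos ha,
      if_pos hb, if_neg hc]
  · have hb0 : entry 0 1 ∘ X ≠ 0 := fun h0 => hb (h0 ▸ zero_mem _)
    obtain ⟨γ, hγ, hbγ⟩ := exists_isUnit_vecMul_eq_single hb0 i₀
    refine ⟨γ, hγ, ?_⟩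
    rw [orbitType, if_pos ha, if_neg hb, if_pos hc, hbγ, hc, zero_vecMul]
    rfl
  · obtain ⟨γ, hγ, hγbc⟩ := LinearIndependent.exists_isUnit_vecMul_eq
      (v := ![entry 0 1 ∘ X, entry 1 1 ∘ X]) (w := ![Pi.single i₁ 1, Pi.single i₀ 1])
      (linearIndependent_fin2.mpr ⟨hc, fun l hl => hb (mem_span_singleton.mpr ⟨l, hl⟩)⟩)
      (linearIndependent_fin2.mpr ⟨by simp,
        fun l hl => single_one_notMem_span_single h (mem_span_singleton.mpr ⟨l, hl⟩)⟩)
    refine ⟨γ, hγ, ?_⟩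
    rw [orbitType, if_pos ha, if_neg hb, if_neg hc,
      show (entry 0 1 ∘ X) ᵥ* γ = Pi.single i₁ 1 from hγbc 0,
      show (entry 1 1 ∘ X) ᵥ* γ = Pi.single i₀ 1 from hγbc 1]
    rfl

lemma exists_span_vecMul_eq_normalForm {i₀ i₁ : ι} (h : i₀ ≠ i₁) (X : ι → ternions F) :
    ∃ A : (Matrix ι ι (ternions F))ˣ, ternions F ∙ (X ᵥ* (A : Matrix ι ι (ternions F))) =
      ternions F ∙ normalForm i₀ i₁ (orbitType X) := by
  by_cases ha : entry 0 0 ∘ X = 0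
  · obtain ⟨γ, hγ, hspan⟩ := exists_span_eq_normalForm_of_entry_00_eq_zero h ha
    refine ⟨(isUnit_mkMatrix isUnit_one hγ 0).unit, ?_⟩
    rwa [IsUnit.unit_spec, vecMul_mkMatrix, ha, zero_vecMul, zero_vecMul, zero_add]
  by_cases hc : entry 1 1 ∘ X = 0
  · obtain ⟨A, hA, hXA⟩ := exists_isUnit_vecMul_eq_of_entry_00_ne_zero ha i₀ isUnit_one
    refine ⟨hA.unit, ?_⟩
    rw [IsUnit.unit_spec, hXA, hc, zero_vecMul, orbitType, if_neg ha, if_pos hc]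
    rfl
  · obtain ⟨γ, hγ, hcγ⟩ := exists_isUnit_vecMul_eq_single hc i₀
    obtain ⟨A, hA, hXA⟩ := exists_isUnit_vecMul_eq_of_entry_00_ne_zero ha i₀ hγ
    refine ⟨hA.unit, ?_⟩
    rw [IsUnit.unit_spec, hXA, hcγ, orbitType, if_neg ha, if_neg hc]
    rfl

end NormalForm

end Ternion

open Ternion in
/-- Under the action of `GL_{n+1}(R)` on the set of all cyclic submodules of the left
`R`-module `R^{n+1}` (a cyclic submodule `R·X` is mapped to `R·(X·A)`, i.e. its
underlying set is mapped by `v ↦ v·A`), there are exactly six orbits. -/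
theorem ternion_cyclic_submodule_orbit_count (F : Type) [Field F] (n : ℕ) (hn : 1 ≤ n) :
    Nat.card (Quot (fun M M' : {M : Submodule (ternions F) (Fin (n + 1) → ternions F) //
        ∃ X, M = Submodule.span (ternions F) {X}} =>
      ∃ A : (Matrix (Fin (n + 1)) (Fin (n + 1)) (ternions F))ˣ,
        (fun v => Matrix.vecMul v A.val) '' (M.val : Set (Fin (n + 1) → ternions F)) =
          (M'.val : Set (Fin (n + 1) → ternions F)))) = 6 := by
  obtain ⟨k, rfl⟩ := Nat.exists_eq_add_of_le' hn
  have h01 : (0 : Fin (k + 1 + 1)) ≠ 1 := Fin.zero_ne_one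
  have orbitType_choose {X : Fin (k + 1 + 1) → ternions F}
      (h : ∃ Y, ternions F ∙ X = ternions F ∙ Y) : orbitType h.choose = orbitType X :=
    (orbitType_eq_of_span_eq h.choose_spec).symm
  refine (Nat.card_quot_eq_of_normalForm (fun M => orbitType M.2.choose)
    (fun t => ⟨_, normalForm 0 1 t, rfl⟩) ?_ ?_ ?_).trans (Nat.card_fin 6)
  · rintro ⟨_, X, rfl⟩ ⟨_, Y, rfl⟩ ⟨A, hA⟩
    rw [Matrix.image_vecMul_span_singleton] at hA
    rw [orbitType_choose, orbitType_choose, ← orbitType_vecMul X A]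
    exact orbitType_eq_of_span_eq (SetLike.coe_injective hA)
  · rintro ⟨_, X, rfl⟩
    obtain ⟨A, hA⟩ := exists_span_vecMul_eq_normalForm h01 X
    exact ⟨A, by rw [Matrix.image_vecMul_span_singleton, orbitType_choose, hA]⟩
  · intro t
    rw [orbitType_choose, orbitType_normalForm h01]
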